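/- arXiv:2110.09340 — 5 statements merged into one kernel-verified Lean document; each statement's English description precedes it below -/
import Mathlib

section
/- For every (k,m) ∈ ℕ × ℕ*: (i) F_{k,m}(ℳ_{k,m}) = ℳ_{k,m}; (ii) F_{k,m} is homogeneous of degree d on ℳ_{k,m}, i.e. F_{k,m}(t·x) = t^d·F_{k,m}(x) for all t ∈ ℂ and x ∈ ℳ_{k,m}; (iii) F_{k,m} is nondegenerate on ℳ_{k,m}, i.e. the only x ∈ ℳ_{k,m} with F_{k,m}(x) = 0 is x = 0. -/
noncomputable section

/-- Model of the space `𝓔 = ℂ^{ℕ*}` of complex sequences `(x_i)_{i ≥ 1}`: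
functions `ℕ → ℂ` with a dummy coordinate `x 0` which encodes the convention `x₀ := 0`. -/
abbrev Eseq : Type := ℕ → ℂ

/-- The submodule of `ℕ → ℂ` corresponding to `𝓔` (dummy coordinate `0` vanishes). -/
def E0 : Submodule ℂ Eseq where
  carrier := {x | x 0 = 0}
  add_mem' := by
    rintro a b ha hb
    simp only [Set.mem_setOf_eq, Pi.add_apply] at *
    rw [ha, hb]; ring
  zero_mem' := rfl
  smul_mem' := by
    rintro c a ha
    simp only [Set.mem_setOf_eq, Pi.smul_apply] at *
    rw [ha, smul_zero]

/-- `𝓛`: the subspace of constant sequences. -/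
def Lconst : Submodule ℂ Eseq where
  carrier := {x | x 0 = 0 ∧ ∀ i, 1 ≤ i → x i = x 1}
  add_mem' := by
    rintro a b ⟨ha0, ha⟩ ⟨hb0, hb⟩
    exact ⟨by simp [ha0, hb0], fun i hi => by simp only [Pi.add_apply, ha i hi, hb i hi]⟩
  zero_mem' := ⟨rfl, fun i _ => rfl⟩
  smul_mem' := by
    rintro c a ⟨ha0, ha⟩
    exact ⟨by simp [ha0], fun i hi => by simp only [Pi.smul_apply, ha i hi]⟩

/-- `ℋ_{k,m} = {x ∈ 𝓔 : β x_{k+m} − x_k = 0}` (convention `x₀ := 0`). -/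
def Hspace (β : ℂ) (k m : ℕ) : Submodule ℂ Eseq where
  carrier := {x | x 0 = 0 ∧ β * x (k + m) - x k = 0}
  add_mem' := by
    rintro a b ⟨ha0, ha⟩ ⟨hb0, hb⟩
    refine ⟨by simp [ha0, hb0], ?_⟩
    simp only [Pi.add_apply]
    linear_combination ha + hb
  zero_mem' := ⟨rfl, by simp⟩
  smul_mem' := by
    rintro c a ⟨ha0, ha⟩
    refine ⟨by simp [ha0], ?_⟩
    simp only [Pi.smul_apply, smul_eq_mul]
    linear_combination c * ha

/-- `𝓟_{k,m} = {x ∈ 𝓔 : x_{i+m} = x_i for all i ≥ k+1}`. -/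
def Pspace (k m : ℕ) : Submodule ℂ Eseq where
  carrier := {x | x 0 = 0 ∧ ∀ i, k + 1 ≤ i → x (i + m) = x i}
  add_mem' := by
    rintro a b ⟨ha0, ha⟩ ⟨hb0, hb⟩
    exact ⟨by simp [ha0, hb0], fun i hi => by simp only [Pi.add_apply, ha i hi, hb i hi]⟩
  zero_mem' := ⟨rfl, fun i _ => rfl⟩
  smul_mem' := by
    rintro c a ⟨ha0, ha⟩
    exact ⟨by simp [ha0], fun i hi => by simp only [Pi.smul_apply, ha i hi]⟩

/-- `ℳ_{k,m} = 𝓟_{k,m} ∩ ℋ_{k,m}`. -/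
def Mspace (β : ℂ) (k m : ℕ) : Submodule ℂ Eseq := Pspace k m ⊓ Hspace β k m

/-- `Q : 𝓔 → 𝓔`, `Q(x)_1 = 0`, `Q(x)_i = x_{i-1}^d` for `i ≥ 2`. -/
def Qmap (d : ℕ) (x : Eseq) : Eseq := fun i => if 2 ≤ i then (x (i - 1)) ^ d else 0

/-- The constant subtracted by the projection `π_{k,m}` onto `ℋ_{k,m}` parallel to `𝓛`. -/
def kappa (β : ℂ) (k m : ℕ) (x : Eseq) : ℂ :=
  if k = 0 then x m else (β * x (k + m) - x k) / (β - 1)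

/-- `π_{k,m} : 𝓔 → 𝓔`, the projection onto `ℋ_{k,m}` parallel to `𝓛`. -/
def projH (β : ℂ) (k m : ℕ) (x : Eseq) : Eseq :=
  fun i => if i = 0 then 0 else x i - kappa β k m x

/-- `F_{k,m} = π_{k,m} ∘ Q`. -/
def Fmap (β : ℂ) (d k m : ℕ) (x : Eseq) : Eseq := projH β k m (Qmap d x)

/-- The coordinate linear form `ω_i` on `ℳ_{k,m}`. -/
def omegaForm (β : ℂ) (k m : ℕ) (i : ℕ) : Module.Dual ℂ (Mspace β k m) where
  toFun v := (v : Eseq) i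
  map_add' a b := rfl
  map_smul' c a := rfl

/-- `L` is the derivative `D_x F_{k,m} : ℳ_{k,m} → ℳ_{k,m}` of `F_{k,m}` at `x`:
in every direction `v ∈ ℳ_{k,m}` and coordinate `i`, `L v` is the derivative at `t = 0`
of `t ↦ F_{k,m}(x + t v)_i`. -/
def IsDerivAt (β : ℂ) (d k m : ℕ) (x : Eseq)
    (L : Mspace β k m →ₗ[ℂ] Mspace β k m) : Prop :=
  ∀ v : Mspace β k m, ∀ i : ℕ,
    ((L v : Eseq) i) = deriv (fun t : ℂ => Fmap β d k m (x + t • (v : Eseq)) i) 0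

/-- The critical set `C(F_{k,m})`: points of `ℳ_{k,m}` where the derivative is not invertible. -/
def CsetD (β : ℂ) (d k m : ℕ) : Set Eseq :=
  {x | x ∈ Mspace β k m ∧
    ∀ L : Mspace β k m →ₗ[ℂ] Mspace β k m, IsDerivAt β d k m x L → ¬ Function.Bijective L}

/-- The post-critical set `PC(F_{k,m}) = ⋃_{j ≥ 1} F_{k,m}^{∘j}(C(F_{k,m}))`. -/
def PCsetD (β : ℂ) (d k m : ℕ) : Set Eseq :=
  ⋃ j : ℕ, ⋃ _ : 1 ≤ j, (Fmap β d k m)^[j] '' CsetD β d k m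

/-- `Δ_{k,m} = {x ∈ ℳ_{k,m} : x_i = x_j for some 1 ≤ i < j ≤ k+m}`. -/
def Delta (β : ℂ) (k m : ℕ) : Set Eseq :=
  {x | x ∈ Mspace β k m ∧ ∃ i j : ℕ, 1 ≤ i ∧ i < j ∧ j ≤ k + m ∧ x i = x j}

/-- Coordinates of a point of `ℂ^n`, indexed from `1` to `n`, with the convention `x₀ := 0`
(and value `0` out of range). -/
def coordFin {n : ℕ} (x : Fin n → ℂ) (i : ℕ) : ℂ :=
  if h : 1 ≤ i ∧ i ≤ n then x ⟨i - 1, by omega⟩ else 0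

/-- The Koch map `G_{k,m} : ℂ^{k+m-1} → ℂ^{k+m-1}`. -/
def Gmap (β : ℂ) (d k m : ℕ) (x : Fin (k + m - 1) → ℂ) : Fin (k + m - 1) → ℂ :=
  if k = 0 then
    fun j => (coordFin x j.1) ^ d - (coordFin x (m - 1)) ^ d
  else
    fun j =>
      (coordFin x j.1 - (β * coordFin x (k + m - 1) - coordFin x (k - 1)) / (β - 1)) ^ d

/-- The critical set `C(G_{k,m})`: points where the derivative is not invertible. -/
def Gcrit (β : ℂ) (d k m : ℕ) : Set (Fin (k + m - 1) → ℂ) :=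
  {z | ¬ Function.Bijective (fderiv ℂ (Gmap β d k m) z)}

/-- The post-critical set `PC(G_{k,m}) = ⋃_{j ≥ 1} G_{k,m}^{∘j}(C(G_{k,m}))`. -/
def GPC (β : ℂ) (d k m : ℕ) : Set (Fin (k + m - 1) → ℂ) :=
  ⋃ j : ℕ, ⋃ _ : 1 ≤ j, (Gmap β d k m)^[j] '' Gcrit β d k m

/-- The polynomial `P_z` associated to a point `z ∈ ℂ^{k+m-1}`. -/
def Ppoly (β : ℂ) (d k m : ℕ) (z : Fin (k + m - 1) → ℂ) : ℂ → ℂ :=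
  if k = 0 then fun t => t ^ d - (coordFin z (m - 1)) ^ d
  else fun t => (t - (β * coordFin z (k + m - 1) - coordFin z (k - 1)) / (β - 1)) ^ d

/-!
`F_{k,m}(x)_i = x_{i-1}^d - κ(Q x)` for `i ≥ 1`, where `κ` is linear; homogeneity is immediate, and
`F(x) = 0` forces `κ(Q x) = -F(x)_1 = 0` and then every `x_i^d = 0`. The map `π_{k,m}` lands in
`ℋ_{k,m}`, and `Q` maps `ℳ_{k,m}` into sequences that are `m`-periodic from index `k + 1` on
(at index `k + 1` because `x_k^d = (β x_{k+m})^d = x_{k+m}^d`), so `F(ℳ_{k,m}) ⊆ ℳ_{k,m}`.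
Conversely, for `y ∈ ℳ_{k,m}` take `x_j = c_j · (y_{j+1} - y_1)^{1/d}` with `c_k = β` and `c_j = 1`
otherwise: periodicity of `y` gives `β x_{k+m} = x_k`, so `x ∈ ℳ_{k,m}`, and `Q x = y - y_1` off
index `0`, whose projection is `y`.
-/

section Qmap

variable {d : ℕ}

lemma Qmap_succ (hd : d ≠ 0) {x : Eseq} (hx : x 0 = 0) (i : ℕ) :
    Qmap d x (i + 1) = x i ^ d := by
  rcases i with _ | i
  · simp [Qmap, hx, zero_pow hd]
  · simp [Qmap]

lemma Qmap_smul (t : ℂ) (x : Eseq) : Qmap d (t • x) = t ^ d • Qmap d x := by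
  funext i
  simp only [Qmap, Pi.smul_apply, smul_eq_mul]
  split_ifs <;> ring

lemma Qmap_add_period {β : ℂ} {k m : ℕ} (hd : d ≠ 0) (hβd : β ^ d = 1) {x : Eseq}
    (hx : x ∈ Mspace β k m) (i : ℕ) (hi : k + 1 ≤ i) : Qmap d x (i + m) = Qmap d x i := by
  obtain ⟨⟨hx0, hxP⟩, -, hxH⟩ := hx
  obtain ⟨j, rfl⟩ : ∃ j, i = j + 1 := ⟨i - 1, by omega⟩
  rw [add_right_comm, Qmap_succ hd hx0, Qmap_succ hd hx0]
  rcases (show k ≤ j by omega).eq_or_lt with rfl | hkj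
  · rw [← sub_eq_zero.mp hxH, mul_pow, hβd, one_mul]
  · rw [hxP j hkj]

end Qmap

section projH

variable {β : ℂ} {k m : ℕ}

lemma projH_apply_of_ne_zero (y : Eseq) {i : ℕ} (hi : i ≠ 0) :
    projH β k m y i = y i - kappa β k m y := if_neg hi

lemma kappa_smul (c : ℂ) (y : Eseq) : kappa β k m (c • y) = c * kappa β k m y := by
  unfold kappa
  split_ifs
  · rfl
  · simp only [Pi.smul_apply, smul_eq_mul]
    ring

lemma projH_smul (c : ℂ) (y : Eseq) : projH β k m (c • y) = c • projH β k m y := by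
  funext i
  simp only [projH, kappa_smul, Pi.smul_apply, smul_eq_mul]
  split_ifs <;> ring

lemma projH_mem_Hspace (hβ1 : β ≠ 1) (y : Eseq) : projH β k m y ∈ Hspace β k m := by
  refine ⟨rfl, ?_⟩
  rcases eq_or_ne k 0 with rfl | hk
  · simp [projH, kappa]
  · rw [projH_apply_of_ne_zero y (by omega), projH_apply_of_ne_zero y hk, kappa, if_neg hk]
    field_simp [sub_ne_zero.mpr hβ1]
    ring

lemma projH_mem_Pspace {y : Eseq} (hy : ∀ i, k + 1 ≤ i → y (i + m) = y i) :
    projH β k m y ∈ Pspace k m :=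
  ⟨rfl, fun i hi => by
    rw [projH_apply_of_ne_zero y (by omega), projH_apply_of_ne_zero y (by omega), hy i hi]⟩

lemma projH_eq_of_add_const (hβ0 : β ≠ 0) (hβ1 : β ≠ 1) (hm : 1 ≤ m) {y z : Eseq} {c : ℂ}
    (hy : y ∈ Hspace β k m) (hz : ∀ i ≠ 0, z i = y i + c) : projH β k m z = y := by
  obtain ⟨hy0, hyH⟩ := hy
  have hκ : kappa β k m z = c := by
    rcases eq_or_ne k 0 with rfl | hk
    · have hym : y m = 0 := by simpa [hy0, hβ0] using hyH
      simp [kappa, hz m (by omega), hym]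
    · rw [kappa, if_neg hk, hz _ (by omega), hz _ hk, div_eq_iff (sub_ne_zero.mpr hβ1)]
      linear_combination hyH
  funext i
  rcases eq_or_ne i 0 with rfl | hi
  · exact hy0.symm
  · rw [projH_apply_of_ne_zero z hi, hκ, hz i hi, add_sub_cancel_right]

end projH

section Fmap

variable {β : ℂ} {d k m : ℕ}

lemma Fmap_smul (t : ℂ) (x : Eseq) : Fmap β d k m (t • x) = t ^ d • Fmap β d k m x := by
  rw [Fmap, Fmap, Qmap_smul, projH_smul]

lemma Fmap_mem_Mspace (hd : d ≠ 0) (hβd : β ^ d = 1) (hβ1 : β ≠ 1) {x : Eseq}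
    (hx : x ∈ Mspace β k m) : Fmap β d k m x ∈ Mspace β k m :=
  ⟨projH_mem_Pspace (Qmap_add_period hd hβd hx), projH_mem_Hspace hβ1 _⟩

lemma exists_Fmap_eq (hd : d ≠ 0) (hβd : β ^ d = 1) (hβ1 : β ≠ 1) (hm : 1 ≤ m) {y : Eseq}
    (hy : y ∈ Mspace β k m) : ∃ x ∈ Mspace β k m, Fmap β d k m x = y := by
  obtain ⟨⟨hy0, hyP⟩, hyH⟩ := hy
  choose r hr using fun w : ℂ => IsAlgClosed.exists_pow_nat_eq w (Nat.pos_of_ne_zero hd)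
  have hr0 : r 0 = 0 := pow_eq_zero_iff hd |>.mp (hr 0)
  set x : Eseq := fun j => (if j = k then β else 1) * r (y (j + 1) - y 1) with hx
  have hx0 : x 0 = 0 := by simp [hx, hr0]
  have hxP : ∀ i, k + 1 ≤ i → x (i + m) = x i := fun i hi => by
    simp only [hx, if_neg (show i + m ≠ k by omega), if_neg (show i ≠ k by omega),
      add_right_comm i m, hyP (i + 1) (by omega)]
  have hxH : β * x (k + m) - x k = 0 := by
    simp only [hx, if_neg (show k + m ≠ k by omega), ↓reduceIte, add_right_comm k m,
      hyP (k + 1) le_rfl]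
    ring
  have hQx : ∀ i ≠ 0, Qmap d x i = y i + -y 1 := fun i hi => by
    obtain ⟨j, rfl⟩ : ∃ j, i = j + 1 := ⟨i - 1, by omega⟩
    have hc : (if j = k then β else 1) ^ d = 1 := by split_ifs <;> simp [hβd]
    rw [Qmap_succ hd hx0, hx, mul_pow, hc, one_mul, hr, sub_eq_add_neg]
  have hβ0 : β ≠ 0 := ne_zero_pow hd (hβd ▸ one_ne_zero)
  exact ⟨x, ⟨⟨hx0, hxP⟩, hx0, hxH⟩, projH_eq_of_add_const hβ0 hβ1 hm hyH hQx⟩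

lemma eq_zero_of_Fmap_eq_zero (hd : d ≠ 0) {x : Eseq} (hx0 : x 0 = 0)
    (hF : Fmap β d k m x = 0) : x = 0 := by
  have hF' : ∀ i ≠ 0, Qmap d x i = kappa β k m (Qmap d x) := fun i hi =>
    sub_eq_zero.mp ((projH_apply_of_ne_zero _ hi).symm.trans (congrFun hF i))
  have hκ : kappa β k m (Qmap d x) = 0 := by
    rw [← hF' 1 one_ne_zero]
    rfl
  funext j
  rw [Pi.zero_apply, ← pow_eq_zero_iff hd, ← Qmap_succ hd hx0, hF' _ j.succ_ne_zero, hκ]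

end Fmap

/-- `F_{k,m}(ℳ_{k,m}) = ℳ_{k,m}`; `F_{k,m}` is homogeneous of degree `d`
and nondegenerate on `ℳ_{k,m}`. -/
theorem stmt4 (d : ℕ) (hd : 2 ≤ d) (β : ℂ) (hβd : β ^ d = 1) (hβ1 : β ≠ 1)
    (k m : ℕ) (hm : 1 ≤ m) :
    Fmap β d k m '' (Mspace β k m : Set Eseq) = (Mspace β k m : Set Eseq) ∧
    (∀ (t : ℂ) (x : Eseq), x ∈ Mspace β k m →
      Fmap β d k m (t • x) = t ^ d • Fmap β d k m x) ∧
    (∀ x ∈ Mspace β k m, Fmap β d k m x = 0 → x = 0) := by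
  have hd0 : d ≠ 0 := by omega
  refine ⟨Set.Subset.antisymm ?_ ?_, fun t x _ => Fmap_smul t x,
    fun x hx => eq_zero_of_Fmap_eq_zero hd0 hx.1.1⟩
  · exact Set.image_subset_iff.mpr fun x hx => Fmap_mem_Mspace hd0 hβd hβ1 hx
  · exact fun y hy => exists_Fmap_eq hd0 hβd hβ1 hm hy
end
end

section
/- For all pairs (k,m), (k',m') ∈ ℕ × ℕ*: (k',m') ⪯ (k,m) if and only if ℳ_{k',m'} ⊆ ℳ_{k,m}; moreover, if ℳ_{k',m'} ⊆ ℳ_{k,m}, then the restriction of F_{k,m} to ℳ_{k',m'} equals F_{k',m'}. -/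
noncomputable section

/-!
A point of `ℳ_{k',m'}` is eventually `m'`-periodic, and when `k' = 0` the relation
`β x_{m'} = x_0 = 0` makes it periodic from the start; this gives `⪯ → ⊆`. Conversely, explicit
indicator-type sequences in `ℳ_{k',m'}` violate the defining equations of `ℳ_{k,m}` unless
`(k',m') ⪯ (k,m)`. For the maps, `β^d = 1` makes `Q` send `ℳ_{k',m'}` into `𝓟_{k',m'}`, so
`π_{k',m'} (Q x) ∈ ℳ_{k',m'} ⊆ ℋ_{k,m}`; since `π_{k,m} (Q x)` is the only point of `ℋ_{k,m}`
differing from `Q x` by a constant, the two projections agree.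
-/

theorem Function.Periodic.eq_of_modEq {α : Type*} {f : ℕ → α} {a : ℕ}
    (hf : Function.Periodic f a) {i j : ℕ} (h : i ≡ j [MOD a]) : f i = f j := by
  rw [← hf.map_mod_nat i, ← hf.map_mod_nat j]
  exact congrArg f h

section Subspaces

variable {β : ℂ} {k m : ℕ} {x : Eseq}

theorem mem_Pspace : x ∈ Pspace k m ↔ x 0 = 0 ∧ ∀ i, k + 1 ≤ i → x (i + m) = x i := Iff.rfl

theorem mem_Hspace : x ∈ Hspace β k m ↔ x 0 = 0 ∧ β * x (k + m) - x k = 0 := Iff.rfl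

theorem mem_Mspace :
    x ∈ Mspace β k m ↔ x 0 = 0 ∧ (∀ i, k + 1 ≤ i → x (i + m) = x i) ∧ β * x (k + m) = x k := by
  rw [Mspace, Submodule.mem_inf, mem_Pspace, mem_Hspace, sub_eq_zero]
  tauto

theorem Pspace.periodic_shift (hx : x ∈ Pspace k m) :
    Function.Periodic (fun n => x (n + (k + 1))) m := fun n => by
  simpa only [Nat.add_right_comm n m] using hx.2 (n + (k + 1)) (by omega)

theorem Pspace.apply_eq_of_modEq (hx : x ∈ Pspace k m) {i j : ℕ} (hi : k < i) (hj : k < j)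
    (h : i ≡ j [MOD m]) : x i = x j := by
  have h' : i - (k + 1) ≡ j - (k + 1) [MOD m] :=
    Nat.ModEq.add_right_cancel' (k + 1) (by rwa [Nat.sub_add_cancel hi, Nat.sub_add_cancel hj])
  simpa only [Nat.sub_add_cancel hi, Nat.sub_add_cancel hj] using
    (Pspace.periodic_shift hx).eq_of_modEq h'

theorem mem_Mspace_zero_iff (hβ0 : β ≠ 0) :
    x ∈ Mspace β 0 m ↔ x 0 = 0 ∧ Function.Periodic x m := by
  rw [mem_Mspace]
  constructor
  · rintro ⟨hx0, hP, hH⟩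
    refine ⟨hx0, fun i => ?_⟩
    rcases Nat.eq_zero_or_pos i with rfl | hi
    · simpa [hx0, hβ0] using hH
    · exact hP i hi
  · rintro ⟨hx0, hper⟩
    exact ⟨hx0, fun i _ => hper i, by rw [hper 0, hx0, mul_zero]⟩

end Subspaces

section Inclusions

variable {β : ℂ} {k m k' m' : ℕ}

theorem Mspace_le_Mspace_of_dvd (hm : 0 < m) (hm' : 0 < m') (h : m' ∣ m) :
    Mspace β k m' ≤ Mspace β k m := by
  intro x hx
  obtain ⟨hx0, -, hH⟩ := mem_Mspace.1 hx
  have hP : x ∈ Pspace k m' := (Submodule.mem_inf.1 hx).1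
  have hm0 : m ≡ 0 [MOD m'] := Nat.modEq_zero_iff_dvd.2 h
  refine mem_Mspace.2 ⟨hx0, fun i hi => Pspace.apply_eq_of_modEq hP (by omega) hi ?_, ?_⟩
  · simpa using hm0.add_left i
  · have hm'0 : m' ≡ 0 [MOD m'] := Nat.modEq_zero_iff_dvd.2 dvd_rfl
    rwa [Pspace.apply_eq_of_modEq hP (by omega) (by omega) ((hm0.trans hm'0.symm).add_left k)]

theorem Mspace_zero_le_Mspace_of_dvd (hβ0 : β ≠ 0) (h : m ∣ k) :
    Mspace β 0 m ≤ Mspace β k m := by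
  intro x hx
  obtain ⟨hx0, hper⟩ := (mem_Mspace_zero_iff hβ0).1 hx
  obtain ⟨a, rfl⟩ := h
  have hk : x (m * a) = 0 := by rw [← hper.map_mod_nat, Nat.mul_mod_right, hx0]
  exact mem_Mspace.2 ⟨hx0, fun i _ => hper i, by rw [hper, hk, mul_zero]⟩

theorem dvd_of_Mspace_le (hm' : 0 < m') (hle : Mspace β k' m' ≤ Mspace β k m) : m' ∣ m := by
  rcases Nat.lt_or_ge m' 2 with hm'1 | hm'2
  · rw [show m' = 1 by omega]
    exact one_dvd m
  let w : Eseq := fun i => if k' < i ∧ i ≡ k' + 1 [MOD m'] then 1 else 0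
  have hw : w ∈ Mspace β k' m' := by
    refine mem_Mspace.2 ⟨by simp [w], fun i hi => ?_, ?_⟩
    · simp only [w, Nat.add_modulus_modEq_iff, show k' < i + m' by omega, show k' < i by omega,
        true_and]
    · have hshift : ¬ k' + m' ≡ k' + 1 [MOD m'] := fun h => by
        have h1 : m' % m' = 1 % m' := Nat.ModEq.add_left_cancel' k' h
        rw [Nat.mod_self, Nat.mod_eq_of_lt hm'2] at h1
        exact zero_ne_one h1
      simp [w, hshift]
  have hk : k ≤ m' * k := Nat.le_mul_of_pos_left k hm'
  set i := k' + 1 + m' * k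
  have hi : i ≡ k' + 1 [MOD m'] := by simp [i, Nat.ModEq]
  have hwi : w i = 1 := if_pos ⟨by omega, hi⟩
  have hwim : w (i + m) = 1 := by
    rw [(mem_Mspace.1 (hle hw)).2.1 i (by omega), hwi]
  have him : i + m ≡ k' + 1 [MOD m'] := by
    by_contra hc
    simp [w, hc] at hwim
  exact Nat.modEq_zero_iff_dvd.1 (Nat.ModEq.add_left_cancel' i (him.trans hi.symm))

theorem eq_of_Mspace_le (hβ1 : β ≠ 1) (hm : 0 < m) (hm' : 0 < m') (hk' : k' ≠ 0)
    (hle : Mspace β k' m' ≤ Mspace β k m) : k' = k := by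
  let s : Eseq := fun i => if i < k' then 0 else if i = k' then β else 1
  have hs : s ∈ Mspace β k' m' := by
    refine mem_Mspace.2 ⟨if_pos (Nat.pos_of_ne_zero hk'), fun i hi => ?_, ?_⟩
    · simp [s, show ¬ i < k' by omega, show i ≠ k' by omega, show ¬ i + m' < k' by omega,
        show i + m' ≠ k' by omega]
    · simp [s, hm'.ne']
  obtain ⟨-, hP, hH⟩ := mem_Mspace.1 (hle hs)
  by_contra hne
  rcases Nat.lt_or_gt_of_ne hne with hlt | hgt
  · simp [s, show ¬ k + m < k' by omega, show k + m ≠ k' by omega, show ¬ k < k' by omega,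
      show k ≠ k' by omega] at hH
    exact hβ1 hH
  · have h := hP k' hgt
    simp [s, hm.ne'] at h
    exact hβ1 h.symm

theorem dvd_of_Mspace_zero_le (hβ1 : β ≠ 1) (hdvd : m' ∣ m)
    (hle : Mspace β 0 m' ≤ Mspace β k m) : m' ∣ k := by
  let w : Eseq := fun i => if m' ∣ i then 0 else 1
  have hw : w ∈ Mspace β 0 m' := by
    refine mem_Mspace.2 ⟨if_pos (dvd_zero m'), fun i _ => ?_, ?_⟩
    · simp [w, Nat.dvd_add_self_right]
    · simp [w]
  obtain ⟨-, -, hH⟩ := mem_Mspace.1 (hle hw)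
  by_contra hk
  have hkm : ¬ m' ∣ k + m := (Nat.dvd_add_left hdvd).not.mpr hk
  simp [w, hk, hkm] at hH
  exact hβ1 hH

theorem Mspace_le_Mspace_iff (hβ0 : β ≠ 0) (hβ1 : β ≠ 1) (hm : 0 < m)
    (hm' : 0 < m') :
    Mspace β k' m' ≤ Mspace β k m ↔ m' ∣ m ∧ (k' = k ∨ (k' = 0 ∧ m' ∣ k)) := by
  refine ⟨fun hle => ⟨dvd_of_Mspace_le hm' hle, ?_⟩, fun ⟨hdvd, hk⟩ => ?_⟩
  · by_cases hk' : k' = 0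
    · subst hk'
      exact Or.inr ⟨rfl, dvd_of_Mspace_zero_le hβ1 (dvd_of_Mspace_le hm' hle) hle⟩
    · exact Or.inl (eq_of_Mspace_le hβ1 hm hm' hk' hle)
  · rcases hk with rfl | ⟨rfl, hk⟩
    · exact Mspace_le_Mspace_of_dvd hm hm' hdvd
    · exact (Mspace_zero_le_Mspace_of_dvd hβ0 hk).trans (Mspace_le_Mspace_of_dvd hm hm' hdvd)

end Inclusions

section Projection

variable {β : ℂ} {d k m : ℕ} {x y : Eseq}

theorem Qmap_apply (hd : d ≠ 0) (hx0 : x 0 = 0) {i : ℕ} (hi : 0 < i) :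
    Qmap d x i = x (i - 1) ^ d := by
  rcases Nat.lt_or_ge i 2 with hi2 | hi2
  · obtain rfl : i = 1 := by omega
    simp [Qmap, hx0, hd]
  · exact if_pos hi2

theorem Qmap_mem_Pspace (hd : d ≠ 0) (hβd : β ^ d = 1) (hx : x ∈ Mspace β k m) :
    Qmap d x ∈ Pspace k m := by
  obtain ⟨hx0, hP, hH⟩ := mem_Mspace.1 hx
  refine ⟨if_neg (by omega), fun i hi => ?_⟩
  rw [Qmap_apply hd hx0 (by omega), Qmap_apply hd hx0 (by omega)]
  rcases Nat.eq_or_lt_of_le hi with rfl | hi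
  · simp only [Nat.add_right_comm k 1 m, Nat.add_sub_cancel]
    rw [← hH, mul_pow, hβd, one_mul]
  · rw [show i + m - 1 = i - 1 + m by omega, hP (i - 1) (by omega)]

def subConst (y : Eseq) (c : ℂ) : Eseq := fun i => if i = 0 then 0 else y i - c

theorem projH_eq_subConst : projH β k m y = subConst y (kappa β k m y) := rfl

theorem subConst_mem_Pspace (hy : y ∈ Pspace k m) (c : ℂ) : subConst y c ∈ Pspace k m :=
  ⟨if_pos rfl, fun i hi => by simp [subConst, show i ≠ 0 by omega, hy.2 i hi]⟩

theorem subConst_mem_Hspace_iff (hβ0 : β ≠ 0) (hβ1 : β ≠ 1) (hm : 0 < m) {c : ℂ} :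
    subConst y c ∈ Hspace β k m ↔ c = kappa β k m y := by
  rw [mem_Hspace]
  rcases Nat.eq_zero_or_pos k with rfl | hk
  · simp [subConst, kappa, hm.ne', hβ0, sub_eq_zero, eq_comm]
  · rw [kappa, if_neg hk.ne', eq_div_iff (sub_ne_zero.2 hβ1)]
    simp only [subConst, if_neg (show k + m ≠ 0 by omega), if_neg hk.ne', ↓reduceIte, true_and]
    constructor <;> intro h <;> linear_combination -h

theorem Fmap_eq_of_Mspace_le {k' m' : ℕ} (hd : d ≠ 0) (hβd : β ^ d = 1) (hβ0 : β ≠ 0)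
    (hβ1 : β ≠ 1) (hm : 0 < m) (hm' : 0 < m') (hle : Mspace β k' m' ≤ Mspace β k m)
    (hx : x ∈ Mspace β k' m') : Fmap β d k m x = Fmap β d k' m' x := by
  have hproj : projH β k' m' (Qmap d x) ∈ Mspace β k' m' :=
    ⟨subConst_mem_Pspace (Qmap_mem_Pspace hd hβd hx) _,
      (subConst_mem_Hspace_iff hβ0 hβ1 hm').2 rfl⟩
  have hκ := (subConst_mem_Hspace_iff hβ0 hβ1 hm).1 (hle hproj).2
  rw [Fmap, Fmap, projH_eq_subConst, projH_eq_subConst, ← hκ]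

end Projection

/-- `(k',m') ⪯ (k,m) ↔ ℳ_{k',m'} ⊆ ℳ_{k,m}`; and if `ℳ_{k',m'} ⊆ ℳ_{k,m}`
then `F_{k,m}` restricted to `ℳ_{k',m'}` equals `F_{k',m'}`. -/
theorem stmt7 (d : ℕ) (hd : 2 ≤ d) (β : ℂ) (hβd : β ^ d = 1) (hβ1 : β ≠ 1)
    (k m k' m' : ℕ) (hm : 1 ≤ m) (hm' : 1 ≤ m') :
    ((m' ∣ m ∧ (k' = k ∨ (k' = 0 ∧ m' ∣ k))) ↔ Mspace β k' m' ≤ Mspace β k m) ∧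
    (Mspace β k' m' ≤ Mspace β k m →
      ∀ x ∈ Mspace β k' m', Fmap β d k m x = Fmap β d k' m' x) := by
  have hβ0 : β ≠ 0 := by
    rintro rfl
    simp [zero_pow (show d ≠ 0 by omega)] at hβd
  exact ⟨(Mspace_le_Mspace_iff hβ0 hβ1 hm hm').symm,
    fun hle x hx => Fmap_eq_of_Mspace_le (by omega) hβd hβ0 hβ1 hm hm' hle hx⟩
end
end

section
/- For every (k,m) ∈ ℕ × ℕ*, the critical set of F_{k,m} : ℳ_{k,m} → ℳ_{k,m} equals {x ∈ ℳ_{k,m} : x_i = 0 for some 1 ≤ i ≤ k+m−1}; that is, the derivative D_x F_{k,m} : ℳ_{k,m} → ℳ_{k,m} fails to be injective if and only if x_i = 0 for some index i with 1 ≤ i ≤ k+m−1. -/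
noncomputable section

/-! The derivative is `v ↦ π_{k,m}(D_xQ v)` and `π_{k,m}` kills exactly the constant sequences.
Since `(D_xQ v)_1 = 0`, the constant is `0`, so `v` lies in the kernel iff `d x_s^{d-1} v_s = 0`
for all `s`, i.e. iff `v` is supported on the zeros of `x`. An element of `ℳ_{k,m}` is determined
by its coordinates `1, …, k+m-1` (the relation `β v_{k+m} = v_k` gives the next one, periodicity
the rest), so the kernel is trivial when `x` has no zero among them. Conversely a zero `x_i` there
gives a kernel vector: `e_i` if `i < k`, the indicator of `i + mℕ` if `k < i`, and
`β e_k + 𝟙_{k+m+mℕ}` if `i = k` (then `x_{k+m} = β⁻¹ x_k = 0`). -/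

lemma mem_Mspace_iff {β : ℂ} {k m : ℕ} {x : Eseq} :
    x ∈ Mspace β k m ↔
      x 0 = 0 ∧ (∀ i, k + 1 ≤ i → x (i + m) = x i) ∧ β * x (k + m) = x k :=
  Submodule.mem_inf.trans
    ⟨fun ⟨⟨h0, hP⟩, _, hH⟩ => ⟨h0, hP, sub_eq_zero.mp hH⟩,
      fun ⟨h0, hP, hH⟩ => ⟨⟨h0, hP⟩, h0, sub_eq_zero.mpr hH⟩⟩

section Derivative

variable {β : ℂ} {d k m : ℕ}

def derivQ (d : ℕ) (x v : Eseq) : Eseq :=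
  fun j => if 2 ≤ j then d * x (j - 1) ^ (d - 1) * v (j - 1) else 0

lemma hasDerivAt_Qmap_line (d : ℕ) (x v : Eseq) (j : ℕ) :
    HasDerivAt (fun t : ℂ => Qmap d (x + t • v) j) (derivQ d x v j) 0 := by
  by_cases hj : 2 ≤ j
  · have hline : HasDerivAt (fun t : ℂ => x (j - 1) + t * v (j - 1)) (v (j - 1)) 0 := by
      simpa using (hasDerivAt_mul_const (v (j - 1))).const_add (x (j - 1))
    simpa [Qmap, derivQ, hj] using hline.fun_pow d
  · simpa [Qmap, derivQ, hj] using hasDerivAt_const (0 : ℂ) (0 : ℂ)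

lemma hasDerivAt_kappa {f : ℂ → Eseq} {f' : Eseq} {t₀ : ℂ}
    (hf : ∀ i, HasDerivAt (fun t => f t i) (f' i) t₀) :
    HasDerivAt (fun t => kappa β k m (f t)) (kappa β k m f') t₀ := by
  unfold kappa
  split_ifs
  exacts [hf m, (((hf _).const_mul β).sub (hf k)).div_const _]

lemma hasDerivAt_projH {f : ℂ → Eseq} {f' : Eseq} {t₀ : ℂ}
    (hf : ∀ i, HasDerivAt (fun t => f t i) (f' i) t₀) (i : ℕ) :
    HasDerivAt (fun t => projH β k m (f t) i) (projH β k m f' i) t₀ := by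
  unfold projH
  split_ifs
  exacts [hasDerivAt_const _ _, (hf i).sub (hasDerivAt_kappa hf)]

lemma projH_eq_zero_iff {y : Eseq} (hy0 : y 0 = 0) (hy1 : y 1 = 0) :
    projH β k m y = 0 ↔ y = 0 := by
  refine ⟨fun h => ?_, fun h => ?_⟩
  · have hκ : kappa β k m y = 0 := by simpa [projH, hy1] using congrFun h 1
    funext i
    rcases eq_or_ne i 0 with rfl | hi
    · exact hy0
    · simpa [projH, hi, hκ] using congrFun h i
  · subst h
    funext i
    simp [projH, kappa]

lemma derivQ_eq_zero_iff (hd : 2 ≤ d) {x v : Eseq} :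
    derivQ d x v = 0 ↔ ∀ s, 1 ≤ s → v s ≠ 0 → x s = 0 := by
  have hd0 : (d : ℂ) ≠ 0 := by exact_mod_cast (by omega : d ≠ 0)
  refine ⟨fun h s hs hv => ?_, fun h => funext fun j => ?_⟩
  · have := congrFun h (s + 1)
    simp_all [derivQ, show 2 ≤ s + 1 by omega]
  · unfold derivQ
    split_ifs with hj
    · rcases eq_or_ne (v (j - 1)) 0 with hv | hv
      · simp [hv]
      · simp [h _ (by omega) hv, zero_pow (by omega : d - 1 ≠ 0)]
    · rfl

variable {x : Eseq} {L : Mspace β k m →ₗ[ℂ] Mspace β k m}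

lemma IsDerivAt.coe_apply (hL : IsDerivAt β d k m x L) (v : Mspace β k m) :
    (L v : Eseq) = projH β k m (derivQ d x v) :=
  funext fun i => (hL v i).trans (hasDerivAt_projH (hasDerivAt_Qmap_line d x v) i).deriv

lemma IsDerivAt.apply_eq_zero_iff (hd : 2 ≤ d) (hL : IsDerivAt β d k m x L)
    (v : Mspace β k m) : L v = 0 ↔ ∀ s, 1 ≤ s → (v : Eseq) s ≠ 0 → x s = 0 := by
  rw [← derivQ_eq_zero_iff hd, ← projH_eq_zero_iff (β := β) (k := k) (m := m)
    (by simp [derivQ]) (by simp [derivQ]), ← hL.coe_apply, Submodule.coe_eq_zero]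

end Derivative

section Kernel

variable {β : ℂ} {k m i : ℕ} {x : Eseq}

lemma Mspace.eq_zero_of_forall_lt (hβ : β ≠ 0) (hm : 1 ≤ m) {v : Eseq} (hv : v ∈ Mspace β k m)
    (h : ∀ s, 1 ≤ s → s < k + m → v s = 0) : v = 0 := by
  obtain ⟨h0, hper, hH⟩ := mem_Mspace_iff.mp hv
  have hk : v k = 0 := by
    rcases Nat.eq_zero_or_pos k with rfl | hk
    exacts [h0, h k hk (by omega)]
  funext s
  induction s using Nat.strong_induction_on with
  | _ s ih =>
    rcases lt_trichotomy s (k + m) with hs | rfl | hs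
    · rcases Nat.eq_zero_or_pos s with rfl | hs0
      exacts [h0, h s hs0 hs]
    · simpa [hk, hβ] using hH
    · obtain ⟨j, rfl⟩ : ∃ j, s = j + m := ⟨s - m, by omega⟩
      rw [hper j (by omega)]
      exact ih j (by omega)

lemma Pspace.apply_add_mul (hx : x ∈ Pspace k m) (hi : k + 1 ≤ i) (t : ℕ) :
    x (i + t * m) = x i := by
  induction t with
  | zero => simp
  | succ t ih => rw [Nat.succ_mul, ← add_assoc, hx.2 _ (hi.trans (Nat.le_add_right _ _)), ih]

def progression (i m : ℕ) : Set ℕ := {j | ∃ t, j = i + t * m}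

lemma indicator_progression_mem_Pspace (h₁ : k + 1 ≤ i) (h₂ : i ≤ k + m) :
    (progression i m).indicator 1 ∈ Pspace k m := by
  have h0 : 0 ∉ progression i m := fun ⟨t, ht⟩ => by omega
  have hshift : ∀ j, k + 1 ≤ j → (j + m ∈ progression i m ↔ j ∈ progression i m) := by
    refine fun j hj => ⟨?_, ?_⟩
    · rintro ⟨_ | t, ht⟩
      · omega
      · exact ⟨t, by rw [Nat.succ_mul] at ht; omega⟩
    · rintro ⟨t, rfl⟩
      exact ⟨t + 1, by ring⟩
  refine ⟨Set.indicator_of_notMem h0 _, fun j hj => ?_⟩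
  by_cases hjP : j ∈ progression i m
  · rw [Set.indicator_of_mem hjP, Set.indicator_of_mem ((hshift j hj).2 hjP)]
    rfl
  · rw [Set.indicator_of_notMem hjP, Set.indicator_of_notMem (mt (hshift j hj).1 hjP)]

lemma apply_eq_zero_of_indicator_progression_ne_zero (hx : x ∈ Pspace k m) (hi : k + 1 ≤ i)
    (hxi : x i = 0) {s : ℕ} (hs : (progression i m).indicator (1 : Eseq) s ≠ 0) : x s = 0 := by
  obtain ⟨t, rfl⟩ := Set.mem_of_indicator_ne_zero hs
  rw [Pspace.apply_add_mul hx hi, hxi]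

lemma single_mem_Mspace (h₁ : 1 ≤ i) (h₂ : i < k) (c : ℂ) : Pi.single i c ∈ Mspace β k m := by
  refine mem_Mspace_iff.mpr ⟨?_, fun j hj => ?_, ?_⟩
  · exact Pi.single_eq_of_ne (M := fun _ => ℂ) (show 0 ≠ i by omega) c
  · rw [Pi.single_eq_of_ne (by omega), Pi.single_eq_of_ne (by omega)]
  · rw [Pi.single_eq_of_ne (by omega), Pi.single_eq_of_ne (by omega), mul_zero]

lemma indicator_progression_mem_Mspace (h₁ : k + 1 ≤ i) (h₂ : i < k + m) :
    (progression i m).indicator 1 ∈ Mspace β k m := by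
  have hP := indicator_progression_mem_Pspace h₁ h₂.le
  have hkm : k + m ∉ progression i m := by
    rintro ⟨_ | t, ht⟩
    · omega
    · rw [Nat.succ_mul] at ht; omega
  have hk : k ∉ progression i m := fun ⟨t, ht⟩ => by omega
  exact mem_Mspace_iff.mpr ⟨hP.1, hP.2, by simp [hkm, hk]⟩

lemma single_add_indicator_progression_mem_Mspace (hk : 1 ≤ k) (hm : 1 ≤ m) :
    Pi.single k β + (progression (k + m) m).indicator 1 ∈ Mspace β k m := by
  have hP := indicator_progression_mem_Pspace (k := k) (i := k + m) (by omega) le_rfl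
  have hkm : k + m ∈ progression (k + m) m := ⟨0, by simp⟩
  have hk : k ∉ progression (k + m) m := fun ⟨t, ht⟩ => by omega
  refine mem_Mspace_iff.mpr ⟨?_, fun j hj => ?_, ?_⟩
  · simp [hP.1, Pi.single_eq_of_ne (show 0 ≠ k by omega)]
  · simp [hP.2 j hj, Pi.single_eq_of_ne (show j + m ≠ k by omega),
      Pi.single_eq_of_ne (show j ≠ k by omega)]
  · simp [hkm, hk, Pi.single_eq_of_ne (show k + m ≠ k by omega)]

lemma exists_mem_Mspace_supported_in_zeros (hβ : β ≠ 0) (hm : 1 ≤ m) (hx : x ∈ Mspace β k m)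
    (hi₁ : 1 ≤ i) (hi₂ : i < k + m) (hxi : x i = 0) :
    ∃ v ∈ Mspace β k m, v ≠ 0 ∧ ∀ s, v s ≠ 0 → x s = 0 := by
  have hxP : x ∈ Pspace k m := (Submodule.mem_inf.mp hx).1
  rcases lt_trichotomy i k with hik | rfl | hik
  · refine ⟨Pi.single i 1, single_mem_Mspace hi₁ hik 1, by simp, fun s hs => ?_⟩
    obtain rfl : s = i := by by_contra h; exact hs (Pi.single_eq_of_ne h 1)
    exact hxi
  · have hi : i ∉ progression (i + m) m := fun ⟨t, ht⟩ => by omega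
    have hxkm : x (i + m) = 0 := by simpa [hxi, hβ] using (mem_Mspace_iff.mp hx).2.2
    refine ⟨_, single_add_indicator_progression_mem_Mspace hi₁ hm,
      fun h => hβ (by simpa [hi] using congrFun h i), fun s hs => ?_⟩
    rcases eq_or_ne s i with rfl | hsi
    · exact hxi
    · refine apply_eq_zero_of_indicator_progression_ne_zero hxP (by omega) hxkm ?_
      simpa [Pi.single_eq_of_ne hsi] using hs
  · have hi : i ∈ progression i m := ⟨0, by simp⟩
    exact ⟨_, indicator_progression_mem_Mspace hik hi₂,
      fun h => by simpa [hi] using congrFun h i,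
      fun s => apply_eq_zero_of_indicator_progression_ne_zero hxP hik hxi⟩

end Kernel

theorem stmt8_general (d : ℕ) (hd : 2 ≤ d) (β : ℂ) (hβd : β ^ d = 1)
    (k m : ℕ) (hm : 1 ≤ m) (x : Eseq) (hx : x ∈ Mspace β k m)
    (L : Mspace β k m →ₗ[ℂ] Mspace β k m) (hL : IsDerivAt β d k m x L) :
    ¬ Function.Injective L ↔ ∃ i, 1 ≤ i ∧ i ≤ k + m - 1 ∧ x i = 0 := by
  have hβ : β ≠ 0 := ne_zero_pow (n := d) (by omega) (by simp [hβd])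
  rw [injective_iff_map_eq_zero]
  push Not
  constructor
  · rintro ⟨v, hLv, hv⟩
    by_contra! hx0
    refine hv (Subtype.ext (Mspace.eq_zero_of_forall_lt hβ hm v.2 fun s hs₁ hs₂ => ?_))
    by_contra hvs
    exact hx0 s hs₁ (by omega) ((hL.apply_eq_zero_iff hd v).1 hLv s hs₁ hvs)
  · rintro ⟨i, hi₁, hi₂, hxi⟩
    obtain ⟨v, hvM, hv, hsupp⟩ :=
      exists_mem_Mspace_supported_in_zeros hβ hm hx hi₁ (by omega) hxi
    exact ⟨⟨v, hvM⟩, (hL.apply_eq_zero_iff hd _).2 fun s _ => hsupp s,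
      fun h => hv (congrArg Subtype.val h)⟩

/-- the critical set of `F_{k,m}` on `ℳ_{k,m}` is
`{x ∈ ℳ_{k,m} : x_i = 0 for some 1 ≤ i ≤ k+m−1}`: the derivative `D_x F_{k,m}` fails to
be injective iff some coordinate `x_i`, `1 ≤ i ≤ k+m−1`, vanishes. -/
theorem stmt8 (d : ℕ) (hd : 2 ≤ d) (β : ℂ) (hβd : β ^ d = 1) (hβ1 : β ≠ 1)
    (k m : ℕ) (hm : 1 ≤ m) (x : Eseq) (hx : x ∈ Mspace β k m)
    (L : Mspace β k m →ₗ[ℂ] Mspace β k m) (hL : IsDerivAt β d k m x L) :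
    ¬ Function.Injective L ↔ ∃ i, 1 ≤ i ∧ i ≤ k + m - 1 ∧ x i = 0 :=
  stmt8_general d hd β hβd k m hm x hx L hL
end
end

section
/- Let (k,m) ∈ ℕ × ℕ*, let z ∈ ℳ_{k,m} be a fixed point of F_{k,m}, and let (k',m') be the exact type of the sequence z. Then z ∈ Δ_{k,m} if and only if (k',m') ≺ (k,m). -/
noncomputable section

/-!
A fixed point `z` of `F_{k,m}` is the orbit of `0` under `t ↦ t ^ d - c`, where `c` is the
constant subtracted by `π_{k,m}`. So a coincidence `z_i = z_j` propagates forward and makes `z`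
periodic from index `i` with period `j - i`: the first `k' + m'` terms are pairwise distinct,
and `z ∈ Δ_{k,m}` amounts to `k' + m' < k + m`. Every tail period is a multiple of `m'`, so
`m' ∣ m`; and if `k' < k`, then `z_{k+m} = z_k`, so the `ℋ_{k,m}` equation reads
`(β - 1) z_k = 0`, whence `z_k = 0 = z_0`: the orbit is purely periodic with period `k`,
so `k' = 0` and `m' ∣ k`.
-/

def PeriodicAfter {α : Type*} (z : ℕ → α) (a p : ℕ) : Prop :=
  ∀ i, a + 1 ≤ i → z (i + p) = z i

structure IsExactType {α : Type*} (z : ℕ → α) (k m : ℕ) : Prop where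
  one_le : 1 ≤ m
  periodicAfter : PeriodicAfter z k m
  minimal : ∀ a b, 1 ≤ b → PeriodicAfter z a b → k ≤ a ∧ m ≤ b

section Sequences

variable {α : Type*} {z : ℕ → α} {a b p q i j k m : ℕ}

namespace PeriodicAfter

theorem mul (h : PeriodicAfter z a p) (q : ℕ) : PeriodicAfter z a (q * p) := by
  induction q with
  | zero => intro i _; simp
  | succ q ih =>
    intro i hi
    rw [Nat.succ_mul, ← Nat.add_assoc, h _ (by omega), ih i hi]

theorem mono (h : PeriodicAfter z a p) (hab : a ≤ b) : PeriodicAfter z b p :=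
  fun i hi => h i (by omega)

theorem mod (hp : PeriodicAfter z a p) (hq : PeriodicAfter z a q) :
    PeriodicAfter z a (q % p) := by
  intro i hi
  have hsplit : i + q % p + q / p * p = i + q := by
    have := Nat.mod_add_div' q p
    omega
  rw [← hp.mul (q / p) _ (by omega), hsplit, hq i hi]

end PeriodicAfter

theorem periodicAfter_of_eq {f : α → α} (hf : ∀ n, z (n + 1) = f (z n))
    (h : z (i + p) = z i) (hi : i ≤ a + 1) : PeriodicAfter z a p := by
  have hshift : ∀ n, z (i + n + p) = z (i + n) := by
    intro n
    induction n with
    | zero => exact h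
    | succ n ih => rw [← Nat.add_assoc, Nat.add_right_comm, hf, hf, ih]
  intro j hj
  obtain ⟨n, rfl⟩ := Nat.exists_eq_add_of_le (hi.trans hj)
  exact hshift n

namespace IsExactType

theorem dvd_of_periodicAfter (hz : IsExactType z k m) (h : PeriodicAfter z a p) : m ∣ p := by
  rcases Nat.eq_zero_or_pos p with rfl | hp
  · exact dvd_zero m
  have hka := (hz.minimal a p hp h).1
  have hmod := (hz.periodicAfter.mono hka).mod h
  have hlt : p % m < m := Nat.mod_lt _ hz.one_le
  by_contra hnd
  have := (hz.minimal a (p % m) (Nat.pos_of_ne_zero (mt Nat.dvd_of_mod_eq_zero hnd)) hmod).2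
  omega

theorem add_lt_of_eq {f : α → α} (hz : IsExactType z k m) (hf : ∀ n, z (n + 1) = f (z n))
    (hi : 1 ≤ i) (hij : i < j) (h : z i = z j) : k + m < j := by
  have hper : PeriodicAfter z (i - 1) (j - i) :=
    periodicAfter_of_eq hf (by rw [Nat.add_sub_cancel' hij.le]; exact h.symm) (by omega)
  have := hz.minimal (i - 1) (j - i) (by omega) hper
  omega

theorem eq_zero_and_dvd_of_eq {f : α → α} (hz : IsExactType z k m)
    (hf : ∀ n, z (n + 1) = f (z n)) (hp : 1 ≤ p) (h : z p = z 0) : k = 0 ∧ m ∣ p := by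
  have hper : PeriodicAfter z 0 p := periodicAfter_of_eq hf (by rwa [Nat.zero_add]) (Nat.zero_le 1)
  exact ⟨Nat.le_zero.mp (hz.minimal 0 p hp hper).1, hz.dvd_of_periodicAfter hper⟩

end IsExactType

end Sequences

theorem Fmap_apply_succ {β : ℂ} {d k m : ℕ} {x : Eseq} (hd : d ≠ 0) (hx0 : x 0 = 0) (n : ℕ) :
    Fmap β d k m x (n + 1) = x n ^ d - kappa β k m (Qmap d x) := by
  simp only [Fmap, projH, Qmap, Nat.succ_ne_zero, if_false, Nat.add_sub_cancel]
  rcases Nat.eq_zero_or_pos n with rfl | hn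
  · simp [hx0, zero_pow hd]
  · rw [if_pos (by omega)]

theorem IsExactType.eq_or_eq_zero_dvd_of_mem_Mspace {f : ℂ → ℂ} {β : ℂ} {z : Eseq}
    {k m k' m' : ℕ} (hz : IsExactType z k' m') (hf : ∀ n, z (n + 1) = f (z n)) (hβ1 : β ≠ 1)
    (hm : 1 ≤ m) (hM : z ∈ Mspace β k m) : k' = k ∨ (k' = 0 ∧ m' ∣ k) := by
  obtain ⟨⟨hz0, hP⟩, -, hH⟩ := hM
  rcases (hz.minimal k m hm hP).1.eq_or_lt with heq | hlt
  · exact Or.inl heq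
  right
  obtain ⟨q, hq⟩ := hz.dvd_of_periodicAfter hP
  have hkm : z (k + m) = z k := by
    rw [hq, Nat.mul_comm]
    exact hz.periodicAfter.mul q k hlt
  have hzk : z k = 0 := by
    have : (β - 1) * z k = 0 := by linear_combination hH - β * hkm
    exact (mul_eq_zero.mp this).resolve_left (sub_ne_zero.mpr hβ1)
  exact hz.eq_zero_and_dvd_of_eq hf (by omega) (hzk.trans hz0.symm)

theorem stmt11_general (d : ℕ) (hd : 2 ≤ d) (β : ℂ) (hβ1 : β ≠ 1)
    (k m : ℕ) (hm : 1 ≤ m) (z : Eseq) (hz : z ∈ Mspace β k m)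
    (hfix : Fmap β d k m z = z)
    (k' m' : ℕ) (hm' : 1 ≤ m')
    (hper : ∀ i, k' + 1 ≤ i → z (i + m') = z i)
    (hexact : ∀ a b : ℕ, 1 ≤ b → (∀ i, a + 1 ≤ i → z (i + b) = z i) → k' ≤ a ∧ m' ≤ b) :
    z ∈ Delta β k m ↔
      ((m' ∣ m ∧ (k' = k ∨ (k' = 0 ∧ m' ∣ k))) ∧ (k', m') ≠ (k, m)) := by
  have htype : IsExactType z k' m' := ⟨hm', hper, hexact⟩
  have hP : PeriodicAfter z k m := hz.1.2
  have hle := hexact k m hm hP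
  set c := kappa β k m (Qmap d z)
  have horbit : ∀ n, z (n + 1) = z n ^ d - c := fun n =>
    (congrFun hfix (n + 1)).symm.trans (Fmap_apply_succ (by omega) hz.1.1 n)
  constructor
  · rintro ⟨-, i, j, hi, hij, hj, hzij⟩
    refine ⟨⟨htype.dvd_of_periodicAfter hP,
      htype.eq_or_eq_zero_dvd_of_mem_Mspace (f := (· ^ d - c)) horbit hβ1 hm hz⟩, ?_⟩
    rintro ⟨⟩
    have := htype.add_lt_of_eq (f := (· ^ d - c)) horbit hi hij hzij
    omega
  · rintro ⟨-, hne⟩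
    have hlt : k' + m' < k + m := by
      by_contra hge
      exact hne (Prod.ext (by omega) (by omega))
    exact ⟨hz, k' + 1, k' + 1 + m', le_add_self, by omega, by omega, (hper _ le_rfl).symm⟩

/-- a fixed point `z` of `F_{k,m}` of exact type `(k',m')` lies in `Δ_{k,m}`
iff `(k',m') ≺ (k,m)`. -/
theorem stmt11 (d : ℕ) (hd : 2 ≤ d) (β : ℂ) (hβd : β ^ d = 1) (hβ1 : β ≠ 1)
    (k m : ℕ) (hm : 1 ≤ m) (z : Eseq) (hz : z ∈ Mspace β k m)
    (hfix : Fmap β d k m z = z)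
    (k' m' : ℕ) (hm' : 1 ≤ m')
    (hper : ∀ i, k' + 1 ≤ i → z (i + m') = z i)
    (hexact : ∀ a b : ℕ, 1 ≤ b → (∀ i, a + 1 ≤ i → z (i + b) = z i) → k' ≤ a ∧ m' ≤ b) :
    z ∈ Delta β k m ↔
      ((m' ∣ m ∧ (k' = k ∨ (k' = 0 ∧ m' ∣ k))) ∧ (k', m') ≠ (k, m)) :=
  stmt11_general d hd β hβ1 k m hm z hz hfix k' m' hm' hper hexact
end
end

section
/- Let d ≥ 2 be an integer, c ∈ ℂ, P(t) = t^d + c, and z_i = P^{∘i}(0) for i ≥ 1, and let ξ = e^{2πi/d}. Fix i ≥ 1 with z_i ≠ 0. Then for every z ∈ ℂ with z ≠ z_1 and z ≠ z_{i+1}, and every w ∈ ℂ with w^d = z − z_1, one has ∑_{j=0}^{d−1} 1/((ξ^j w − z_i)·(d·(ξ^j w)^{d−1})^2) = (1/(d·z_i^{d−1}))·(1/(z − z_{i+1}) − 1/(z − z_1)). -/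
/-!
Every `u = ξ ^ j * w` is a root of `t ^ d = A` with `A = w ^ d = z - z₁`, so `(d u^{d-1})² = d² A² / u²`
and the `j`-th summand is `(u + a + a² / (u - a)) / (d A)²` with `a = z_i`. Summed over the `d` roots,
`∑ u = 0` and `∑ 1 / (u - a)` is minus the logarithmic derivative of `t ^ d - A` at `a`, i.e.
`d a^{d-1} / (A - a^d)`; finally `A - a^d = z - z_{i+1}`.
-/

noncomputable section

open Polynomial Finset

section

variable {K : Type*} [Field K] {n : ℕ} {ζ : K}

theorem IsPrimitiveRoot.sum_one_div_sub_mul (hζ : IsPrimitiveRoot ζ n) {w a : K}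
    (ha : a ^ n ≠ w ^ n) :
    ∑ j ∈ range n, 1 / (a - ζ ^ j * w) = n * a ^ (n - 1) / (a ^ n - w ^ n) := by
  have hsplit := X_pow_sub_C_splits_of_isPrimitiveRoot hζ (rfl : w ^ n = w ^ n)
  have heval : (X ^ n - C (w ^ n)).eval a ≠ 0 := by simpa [sub_eq_zero] using ha
  have key := hsplit.eval_derivative_div_eval_of_ne_zero heval
  rw [← nthRoots, hζ.nthRoots_eq rfl, Multiset.map_map, derivative_sub, derivative_C, sub_zero,
    derivative_X_pow] at key
  simp only [eval_mul, eval_C, eval_pow, eval_X, eval_sub] at key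
  exact key.symm

theorem one_div_sub_mul_deriv_pow_sq {u a : K} (hn : n ≠ 0) (hn0 : (n : K) ≠ 0)
    (hu : u ^ n ≠ 0) (hua : u ≠ a) :
    1 / ((u - a) * (n * u ^ (n - 1)) ^ 2) =
      (u + a - a ^ 2 * (1 / (a - u))) / (n * u ^ n) ^ 2 := by
  have hu0 : u ≠ 0 := by rintro rfl; simp_all
  obtain ⟨m, rfl⟩ : ∃ m, n = m + 1 := ⟨n - 1, by omega⟩
  have : u - a ≠ 0 := sub_ne_zero.mpr hua
  have : a - u ≠ 0 := sub_ne_zero.mpr hua.symm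
  simp only [add_tsub_cancel_right]
  field_simp
  ring

theorem IsPrimitiveRoot.sum_one_div_sub_mul_deriv_pow_sq (hζ : IsPrimitiveRoot ζ n)
    (hn : 2 ≤ n) {w a : K} (hw : w ^ n ≠ 0) (ha : a ^ n ≠ w ^ n) :
    ∑ j ∈ range n, 1 / ((ζ ^ j * w - a) * (n * (ζ ^ j * w) ^ (n - 1)) ^ 2) =
      a / (n * w ^ n * (w ^ n - a ^ n)) := by
  have : NeZero n := ⟨by omega⟩
  have hn0 : (n : K) ≠ 0 := hζ.neZero'.out
  have hroot (j : ℕ) : (ζ ^ j * w) ^ n = w ^ n := by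
    rw [mul_pow, ← pow_mul, mul_comm j, pow_mul, hζ.pow_eq_one, one_pow, one_mul]
  have hne (j : ℕ) : ζ ^ j * w ≠ a := fun h => ha (by rw [← h, hroot])
  simp_rw [one_div_sub_mul_deriv_pow_sq (by omega) hn0 ((hroot _).symm ▸ hw) (hne _), hroot,
    ← sum_div, sum_sub_distrib, sum_add_distrib, ← mul_sum, ← sum_mul,
    hζ.geom_sum_eq_zero (by omega), hζ.sum_one_div_sub_mul ha, sum_const, card_range,
    nsmul_eq_mul]
  have : w ^ n - a ^ n ≠ 0 := sub_ne_zero.mpr ha.symm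
  have : a ^ n - w ^ n ≠ 0 := sub_ne_zero.mpr ha
  field_simp
  linear_combination (-(n * a * (w ^ n - a ^ n))) * mul_pow_sub_one (by omega : n ≠ 0) a

end

theorem stmt16_general (d : ℕ) (hd : 2 ≤ d) (c : ℂ)
    (P : ℂ → ℂ) (hP : P = fun t : ℂ => t ^ d + c)
    (zs : ℕ → ℂ) (hzs : ∀ n : ℕ, zs n = P^[n] 0)
    (ξ : ℂ) (hξ : ξ = Complex.exp (2 * Real.pi * Complex.I / d))
    (i : ℕ) (hzi : zs i ≠ 0)
    (z : ℂ) (hz1 : z ≠ zs 1) (hzi1 : z ≠ zs (i + 1))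
    (w : ℂ) (hw : w ^ d = z - zs 1) :
    ∑ j ∈ Finset.range d,
      1 / ((ξ ^ j * w - zs i) * ((d : ℂ) * (ξ ^ j * w) ^ (d - 1)) ^ 2) =
    (1 / ((d : ℂ) * zs i ^ (d - 1))) *
      (1 / (z - zs (i + 1)) - 1 / (z - zs 1)) := by
  have hξd : IsPrimitiveRoot ξ d := hξ ▸ Complex.isPrimitiveRoot_exp d (by omega)
  have hzs_one : zs 1 = c := by simp [hzs, hP, zero_pow (by omega : d ≠ 0)]
  have hzs_succ : zs (i + 1) = zs i ^ d + c := by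
    rw [hzs, hzs, Function.iterate_succ_apply', hP]
  rw [hzs_one] at hz1 hw ⊢
  rw [hzs_succ] at hzi1 ⊢
  have hwd : w ^ d ≠ 0 := hw ▸ sub_ne_zero.mpr hz1
  have hwd_ne : zs i ^ d ≠ w ^ d := by
    rw [hw]; contrapose! hzi1; linear_combination -hzi1
  have hsub : z - (zs i ^ d + c) = w ^ d - zs i ^ d := by rw [hw]; ring
  rw [hξd.sum_one_div_sub_mul_deriv_pow_sq hd hwd hwd_ne, hsub, ← hw]
  have : w ^ d - zs i ^ d ≠ 0 := sub_ne_zero.mpr hwd_ne.symm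
  field_simp
  rw [mul_pow_sub_one (by omega) (zs i)]
  ring

/-- the pushforward identity for the quadratic differentials
`Q_i = dt²/(t − z_i)` under `P(t) = t^d + c`, in algebraic form. -/
theorem stmt16 (d : ℕ) (hd : 2 ≤ d) (c : ℂ)
    (P : ℂ → ℂ) (hP : P = fun t : ℂ => t ^ d + c)
    (zs : ℕ → ℂ) (hzs : ∀ n : ℕ, zs n = P^[n] 0)
    (ξ : ℂ) (hξ : ξ = Complex.exp (2 * Real.pi * Complex.I / d))
    (i : ℕ) (hi : 1 ≤ i) (hzi : zs i ≠ 0)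
    (z : ℂ) (hz1 : z ≠ zs 1) (hzi1 : z ≠ zs (i + 1))
    (w : ℂ) (hw : w ^ d = z - zs 1) :
    ∑ j ∈ Finset.range d,
      1 / ((ξ ^ j * w - zs i) * ((d : ℂ) * (ξ ^ j * w) ^ (d - 1)) ^ 2) =
    (1 / ((d : ℂ) * zs i ^ (d - 1))) *
      (1 / (z - zs (i + 1)) - 1 / (z - zs 1)) :=
  stmt16_general d hd c P hP zs hzs ξ hξ i hzi z hz1 hzi1 w hw
end
end
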